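/- Define α_o(r) = Σ_{k=1}^{r/2} (2k-1) · Σ_{s=k}^{r/2} (1/(2s-1)) · C(2s-1, s+k-1) · 2^{-(2s-1)} for even positive integers r. Then lim_{r→∞} α_o(r)/√r = 1/√(2π). -/

import Mathlib

open Filter Finset

/-- α_o(r) = Σ_{k=1}^{r/2} (2k-1) Σ_{s=k}^{r/2} (1/(2s-1)) C(2s-1, s+k-1) 2^{-(2s-1)}, for even r. -/
noncomputable def alphaO (r : ℕ) : ℝ :=
  ∑ k ∈ Finset.Icc 1 (r / 2), (2 * (k : ℝ) - 1) *
    ∑ s ∈ Finset.Icc k (r / 2),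
      (1 / (2 * (s : ℝ) - 1)) * (Nat.choose (2 * s - 1) (s + k - 1)) * (1 / 2) ^ (2 * s - 1)

-- per-term identity
lemma term_id (t i : ℕ) (hi : i ≤ t) :
    (2 * (i:ℝ) + 1) * (Nat.choose (2*t+1) (t+i+1)) =
      (2*(t:ℝ)+1) * (Nat.choose (2*t) (t+i)) - (2*(t:ℝ)+1) * (Nat.choose (2*t) (t+i+1)) := by
  have A : (2*t+1) * Nat.choose (2*t) (t+i) = Nat.choose (2*t+1) (t+i+1) * (t+i+1) :=
    Nat.add_one_mul_choose_eq (2*t) (t+i)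
  have B : (2*t+1) * Nat.choose (2*t) (t+i+1) = Nat.choose (2*t+1) (t+i+1) * (t-i) := by
    have h1 := Nat.choose_succ_right_eq (2*t+1) (t+i+1)
    have h2 := Nat.add_one_mul_choose_eq (2*t) (t+i+1)
    have : 2*t+1 - (t+i+1) = t - i := by omega
    rw [this] at h1
    rw [h2, h1]
  have hA := congrArg (fun x : ℕ => (x : ℝ)) A
  have hB := congrArg (fun x : ℕ => (x : ℝ)) B
  push_cast [Nat.sub_add_cancel, hi] at hA hB
  linear_combination hB - hA

lemma telesum (t : ℕ) :
    ∑ i ∈ Finset.range (t+1), (2*(i:ℝ)+1) * (Nat.choose (2*t+1) (t+i+1)) =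
      (2*(t:ℝ)+1) * (Nat.choose (2*t) t) := by
  have h : ∑ i ∈ Finset.range (t+1),
      ((2*(t:ℝ)+1) * (Nat.choose (2*t) (t+i)) - (2*(t:ℝ)+1) * (Nat.choose (2*t) (t+i+1)))
      = (2*(t:ℝ)+1) * (Nat.choose (2*t) (t+0)) - (2*(t:ℝ)+1) * (Nat.choose (2*t) (t+(t+1))) := by
    have := Finset.sum_range_sub' (f := fun i => (2*(t:ℝ)+1) * (Nat.choose (2*t) (t+i))) (n := t+1)
    simpa [add_assoc] using this
  rw [Finset.sum_congr rfl (fun i hi => term_id t i (by simpa using Nat.lt_succ_iff.mp (Finset.mem_range.mp hi)))]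
  rw [h]
  have : Nat.choose (2*t) (t+(t+1)) = 0 := Nat.choose_eq_zero_of_lt (by omega)
  simp [this]

lemma innerSum13 (t : ℕ) :
    ∑ k ∈ Finset.Icc 1 (t+1), (2*(k:ℝ)-1) *
      ((1 / (2 * (((t+1:ℕ)) : ℝ) - 1)) * (Nat.choose (2*(t+1)-1) ((t+1)+k-1)) * ((1:ℝ)/2)^(2*(t+1)-1))
    = (1/2) * (Nat.choose (2*t) t) / 4^t := by
  rw [← Finset.Ico_add_one_right_eq_Icc, Finset.sum_Ico_eq_sum_range]
  have e2 : t + 1 + 1 - 1 = t + 1 := by omega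
  rw [e2]
  have key : ∀ i ∈ Finset.range (t+1),
      (2*((1+i:ℕ):ℝ)-1) *
        ((1 / (2 * (((t+1:ℕ)) : ℝ) - 1)) * (Nat.choose (2*(t+1)-1) ((t+1)+(1+i)-1)) * ((1:ℝ)/2)^(2*(t+1)-1))
      = (1 / (2*(t:ℝ)+1)) * ((1:ℝ)/2)^(2*t+1) * ((2*(i:ℝ)+1) * (Nat.choose (2*t+1) (t+i+1))) := by
    intro i _
    have e1 : 2*(t+1)-1 = 2*t+1 := by omega
    have e3 : (t+1)+(1+i)-1 = t+i+1 := by omega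
    rw [e1, e3]
    push_cast
    ring
  rw [Finset.sum_congr rfl key, ← Finset.mul_sum, telesum]
  have h1 : (2*(t:ℝ)+1) ≠ 0 := by positivity
  have h2 : ((1:ℝ)/2)^(2*t+1) = (1/2) * (1/4)^t := by
    rw [pow_succ, pow_mul]; norm_num [mul_comm]
  rw [h2]
  field_simp
  ring
  rw [mul_assoc, ← mul_pow]; norm_num

lemma alphaO_sum (m : ℕ) :
    alphaO (2*m) = ∑ t ∈ Finset.range m, (1/2:ℝ) * (Nat.choose (2*t) t) / 4^t := by
  unfold alphaO
  have hm : 2*m/2 = m := by omega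
  rw [hm]
  rw [Finset.sum_congr rfl (fun k _ => Finset.mul_sum _ _ _)]
  rw [Finset.sum_comm' (s' := fun s => Finset.Icc 1 s) (t' := Finset.Icc 1 m)
    (by intro k s; simp only [Finset.mem_Icc]; omega)]
  rw [← Finset.Ico_add_one_right_eq_Icc, Finset.sum_Ico_eq_sum_range]
  have e : m + 1 - 1 = m := by omega
  rw [e]
  refine Finset.sum_congr rfl (fun t _ => ?_)
  have e1 : 1 + t = t + 1 := by omega
  rw [e1]
  exact innerSum13 t

lemma sum_half (m : ℕ) :
    ∑ t ∈ Finset.range m, (1/2:ℝ) * (Nat.choose (2*t) t) / 4^t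
      = (m:ℝ) * (Nat.choose (2*m) m) / 4^m := by
  induction m with
  | zero => simp
  | succ n ih =>
    rw [Finset.sum_range_succ, ih]
    have hc := Nat.succ_mul_centralBinom_succ n
    have hcast : ((n:ℝ)+1) * (Nat.choose (2*(n+1)) (n+1)) = 2*(2*(n:ℝ)+1) * (Nat.choose (2*n) n) := by
      have : ((n+1) * Nat.centralBinom (n+1) : ℕ) = (2 * (2*n+1) * Nat.centralBinom n : ℕ) := hc
      have := congrArg (fun x : ℕ => (x:ℝ)) this
      simpa [Nat.centralBinom] using this
    have h4 : (4:ℝ)^n ≠ 0 := by positivity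
    push_cast
    push_cast at hcast
    have h4' : (4:ℝ)^(n+1) ≠ 0 := by positivity
    linear_combination (-1) * hcast / 4^(n+1)

open Stirling Real in
lemma central_ratio (n : ℕ) (hn : 1 ≤ n) :
    Real.sqrt n * (Nat.choose (2*n) n : ℝ) / 4^n
      = stirlingSeq (2*n) / (stirlingSeq n)^2 := by
  have hn0 : (0:ℝ) < n := by exact_mod_cast hn
  have hch : (Nat.choose (2*n) n : ℝ) * ((n.factorial:ℝ) * (n.factorial:ℝ)) = ((2*n).factorial:ℝ) := by
    have h := Nat.choose_mul_factorial_mul_factorial (show n ≤ 2*n by omega)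
    rw [show 2*n - n = n from by omega] at h
    push_cast [← h]
    ring
  rw [stirlingSeq, stirlingSeq]
  have h4 : Real.sqrt (2*((2*n:ℕ):ℝ)) = 2 * Real.sqrt n := by
    push_cast
    rw [show (2:ℝ)*(2*(n:ℝ)) = 2^2*(n:ℝ) by ring,
        Real.sqrt_mul (by positivity), Real.sqrt_sq (by norm_num)]
  have hpow : (((2*n:ℕ):ℝ)/Real.exp 1)^(2*n) = 4^n * (((n:ℝ)/Real.exp 1)^n)^2 := by
    push_cast
    rw [show ((2:ℝ)*(n:ℝ))/Real.exp 1 = 2 * ((n:ℝ)/Real.exp 1) by ring, mul_pow,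
        show ((2:ℝ))^(2*n) = 4^n by rw [pow_mul]; norm_num,
        show 2*n = n*2 by ring, pow_mul]
  rw [h4, hpow]
  set E := ((n:ℝ)/Real.exp 1)^n with hE
  have hmulself : Real.sqrt (2*(n:ℝ)) * Real.sqrt (2*(n:ℝ)) = 2*(n:ℝ) :=
    Real.mul_self_sqrt (by positivity)
  have hmuln : Real.sqrt (n:ℝ) * Real.sqrt (n:ℝ) = (n:ℝ) :=
    Real.mul_self_sqrt (by positivity)
  have hss : Real.sqrt ((n:ℝ)) ≠ 0 := ne_of_gt (Real.sqrt_pos.mpr hn0)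
  have hs2 : Real.sqrt (2*(n:ℝ)) ≠ 0 := ne_of_gt (Real.sqrt_pos.mpr (by positivity))
  have hEne : E ≠ 0 := by rw [hE]; positivity
  have hf : ((n.factorial:ℕ) : ℝ) ≠ 0 := by positivity
  have h4n : (4:ℝ)^n ≠ 0 := by positivity
  field_simp
  rw [Real.sq_sqrt hn0.le, Real.sq_sqrt (by positivity), ← hch]
  ring

open Stirling Real in
lemma central_tendsto :
    Tendsto (fun n : ℕ => Real.sqrt n * (Nat.choose (2*n) n : ℝ) / 4^n) atTop
      (nhds (1 / Real.sqrt Real.pi)) := by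
  have h2n : Tendsto (fun n : ℕ => 2*n) atTop atTop :=
    tendsto_atTop_atTop_of_monotone (fun a b h => by omega) (fun b => ⟨b, by omega⟩)
  have h1 : Tendsto (fun n : ℕ => stirlingSeq (2*n)) atTop (nhds (Real.sqrt Real.pi)) :=
    tendsto_stirlingSeq_sqrt_pi.comp h2n
  have h2 : Tendsto (fun n : ℕ => (stirlingSeq n)^2) atTop (nhds ((Real.sqrt Real.pi)^2)) :=
    tendsto_stirlingSeq_sqrt_pi.pow 2
  have hpi : (Real.sqrt Real.pi)^2 = Real.pi := Real.sq_sqrt Real.pi_pos.le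
  have hpne : ((Real.sqrt Real.pi)^2) ≠ 0 := by rw [hpi]; exact Real.pi_ne_zero
  have hdiv := h1.div h2 hpne
  have hval : Real.sqrt Real.pi / (Real.sqrt Real.pi)^2 = 1 / Real.sqrt Real.pi := by
    rw [hpi]
    have hne : Real.sqrt Real.pi ≠ 0 := ne_of_gt (Real.sqrt_pos.mpr Real.pi_pos)
    field_simp
    exact hpi
  rw [hval] at hdiv
  refine hdiv.congr' ?_
  filter_upwards [Filter.eventually_ge_atTop 1] with n hn
  exact (central_ratio n hn).symm

theorem stmt13 :
    Tendsto (fun m : ℕ => alphaO (2 * m) / Real.sqrt (2 * m)) atTop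
      (nhds (1 / Real.sqrt (2 * Real.pi))) := by
  have base := central_tendsto.mul_const (1 / Real.sqrt 2)
  have hv : (1 / Real.sqrt Real.pi) * (1 / Real.sqrt 2) = 1 / Real.sqrt (2 * Real.pi) := by
    rw [Real.sqrt_mul (by norm_num : (0:ℝ) ≤ 2)]
    ring
  rw [hv] at base
  refine base.congr' ?_
  filter_upwards [Filter.eventually_ge_atTop 1] with m hm
  have hm0 : (0:ℝ) < m := by exact_mod_cast hm
  have hcf : alphaO (2*m) = (m:ℝ) * (Nat.choose (2*m) m) / 4^m := by
    rw [alphaO_sum, sum_half]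
  rw [hcf]
  clear hcf
  have hs : Real.sqrt ((2*(m:ℕ) : ℕ):ℝ) = Real.sqrt 2 * Real.sqrt m := by
    push_cast
    rw [Real.sqrt_mul (by norm_num : (0:ℝ) ≤ 2)]
  rw [show ((2:ℝ)*(m:ℝ)) = (((2*m : ℕ)):ℝ) by push_cast; ring, hs]
  have hmm : Real.sqrt (m:ℝ) * Real.sqrt (m:ℝ) = (m:ℝ) := Real.mul_self_sqrt hm0.le
  have hs0 : Real.sqrt (m:ℝ) ≠ 0 := ne_of_gt (Real.sqrt_pos.mpr hm0)
  have hs2 : Real.sqrt 2 ≠ 0 := by positivity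
  have h4 : (4:ℝ)^m ≠ 0 := by positivity
  field_simp
  ring_nf
  rw [Real.sq_sqrt hm0.le]
  ring
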